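/- arXiv:1702.05480 — 4 statements merged into one kernel-verified Lean document; each statement's English description precedes it below -/
import Mathlib

section
/- Fix n ≥ 2 and index the positive roots of 𝔰𝔩_n by pairs (p,q) with 1 ≤ p ≤ q ≤ n−1 (the root α_{p,q} = α_p + ⋯ + α_q), so N = n(n−1)/2. A Dyck path is a finite sequence of pairs (β_0,…,β_k) such that either k = 0 and β_0 = (i,i) for some i, or k ≥ 1, β_0 = (i,i) and β_k = (j,j) with 1 ≤ i < j ≤ n−1, and for each s, if β_s = (p,q) then β_{s+1} = (p,q+1) or β_{s+1} = (p+1,q). For nonnegative reals m_1,…,m_{n−1}, the FFLV polytope P(m) ⊆ ℝ^N_{≥0} is the set of points (r_{p,q}) with all coordinates ≥ 0 such that for every Dyck path (β_0,…,β_k) with β_0 = (i,i) and β_k = (j,j), r_{β_0} + ⋯ + r_{β_k} ≤ m_i + ⋯ + m_j. Then the FFLV polytope P(ρ) with m_1 = ⋯ = m_{n−1} = 1 satisfies the weak Minkowski property: every lattice point z ∈ P(1,…,1) ∩ ℤ^N can be written as z = z_1 + ⋯ + z_{n−1} where for each i, z_i is a lattice point of P(e_i), the FFLV polytope with m_i =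 1 and m_j = 0 for j ≠ i. -/
/-- A Dyck path for `𝔰𝔩_n`: a sequence `β_0, …, β_k` of positive roots (encoded as pairs
`(p,q)` with `1 ≤ p ≤ q ≤ n-1`, standing for `α_{p,q} = α_p + ⋯ + α_q`), starting and ending
at simple roots, with starting simple root strictly smaller than the ending one when `k ≥ 1`,
and where each step goes from `(p,q)` to `(p,q+1)` or `(p+1,q)`. -/
def IsDyckPath (n k : ℕ) (β : Fin (k + 1) → ℕ × ℕ) : Prop :=
  (∀ s, 1 ≤ (β s).1 ∧ (β s).1 ≤ (β s).2 ∧ (β s).2 ≤ n - 1) ∧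
  (β 0).1 = (β 0).2 ∧
  (β (Fin.last k)).1 = (β (Fin.last k)).2 ∧
  (1 ≤ k → (β 0).1 < (β (Fin.last k)).1) ∧
  (∀ s : Fin k, β s.succ = ((β s.castSucc).1, (β s.castSucc).2 + 1) ∨
    β s.succ = ((β s.castSucc).1 + 1, (β s.castSucc).2))

/-- Membership in the FFLV polytope `P(m)` for `𝔰𝔩_n` with weight coefficients
`m_1, …, m_{n-1}`: all coordinates (indexed by positive roots `(p,q)`) are nonnegative and for
every Dyck path from `(i,i)` to `(j,j)` the sum of the coordinates along the path is at most
`m_i + ⋯ + m_j`. -/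
def InFFLV (n : ℕ) (m : ℕ → ℝ) (r : ℕ × ℕ → ℝ) : Prop :=
  (∀ p q : ℕ, 1 ≤ p → p ≤ q → q ≤ n - 1 → 0 ≤ r (p, q)) ∧
  ∀ (k : ℕ) (β : Fin (k + 1) → ℕ × ℕ), IsDyckPath n k β →
    ∑ s, r (β s) ≤ ∑ t ∈ Finset.Icc (β 0).1 (β (Fin.last k)).1, m t

namespace FFLVAux

/-- Height function: max over monotone lattice paths from the diagonal to `(p,q)` of
`(start - 1) + (sum of z along the path)`. -/
def Hf (z : ℕ × ℕ → ℤ) : ℕ → ℕ → ℤ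
  | p, q =>
    if q = 0 then 0
    else
      z (p, q) +
        if p = q then
          (if 2 ≤ p then max ((p : ℤ) - 1) (Hf z (p - 1) q) else (p : ℤ) - 1)
        else
          (if 2 ≤ p then max (Hf z p (q - 1)) (Hf z (p - 1) q) else Hf z p (q - 1))
  termination_by p q => p + q
  decreasing_by all_goals omega

lemma Hf_eq (z : ℕ × ℕ → ℤ) (p q : ℕ) :
    Hf z p q =
      if q = 0 then 0
      else
        z (p, q) +
          if p = q then
            (if 2 ≤ p then max ((p : ℤ) - 1) (Hf z (p - 1) q) else (p : ℤ) - 1)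
          else
            (if 2 ≤ p then max (Hf z p (q - 1)) (Hf z (p - 1) q) else Hf z p (q - 1)) := by
  conv_lhs => rw [Hf]

/-- One-step monotonicity of `Hf` along lattice path steps. -/
lemma Hf_step (z : ℕ × ℕ → ℤ) {p' q' p q : ℕ} (h1 : 1 ≤ p') (h1' : p' ≤ q')
    (hs : (p = p' ∧ q = q' + 1) ∨ (p = p' + 1 ∧ q = q')) (hpq : p ≤ q) :
    Hf z p' q' + z (p, q) ≤ Hf z p q := by
  rcases hs with ⟨rfl, rfl⟩ | ⟨rfl, rfl⟩
  · rw [Hf_eq z p (q' + 1), if_neg (by omega : ¬ q' + 1 = 0),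
      if_neg (by omega : ¬ p = q' + 1)]
    simp only [Nat.add_sub_cancel]
    by_cases h2 : 2 ≤ p
    · rw [if_pos h2]
      have := le_max_left (Hf z p q') (Hf z (p - 1) (q' + 1))
      omega
    · rw [if_neg h2]; omega
  · have h2 : 2 ≤ p' + 1 := by omega
    have hq0 : ¬ q = 0 := by omega
    rw [Hf_eq z (p' + 1) q, if_neg hq0]
    simp only [Nat.add_sub_cancel]
    by_cases hpqe : p' + 1 = q
    · rw [if_pos hpqe, if_pos h2]
      have := le_max_right ((((p' : ℕ) + 1 : ℕ) : ℤ) - 1) (Hf z p' q)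
      omega
    · rw [if_neg hpqe, if_pos h2]
      have := le_max_right (Hf z (p' + 1) (q - 1)) (Hf z p' q)
      omega

/-- Lower bound: `Hf z p q ≥ p - 1 + z (p,q)` on the valid range. -/
lemma Hf_lb (n : ℕ) (z : ℕ × ℕ → ℤ)
    (znn : ∀ p q : ℕ, 1 ≤ p → p ≤ q → q ≤ n - 1 → 0 ≤ z (p, q)) :
    ∀ q p : ℕ, 1 ≤ p → p ≤ q → q ≤ n - 1 → (p : ℤ) - 1 + z (p, q) ≤ Hf z p q := by
  intro q
  induction q using Nat.strong_induction_on with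
  | _ q ih =>
    intro p h1 h2 h3
    have hq0 : ¬ q = 0 := by omega
    rw [Hf_eq, if_neg hq0]
    by_cases hpq : p = q
    · rw [if_pos hpq]
      by_cases h2p : 2 ≤ p
      · rw [if_pos h2p]
        have := le_max_left ((p : ℤ) - 1) (Hf z (p - 1) q)
        omega
      · rw [if_neg h2p]; omega
    · rw [if_neg hpq]
      have hple : p ≤ q - 1 := by omega
      have ihq := ih (q - 1) (by omega) p h1 hple (by omega)
      have hz1 : 0 ≤ z (p, q - 1) := znn p (q - 1) h1 hple (by omega)
      by_cases h2p : 2 ≤ p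
      · rw [if_pos h2p]
        have := le_max_left (Hf z p (q - 1)) (Hf z (p - 1) q)
        omega
      · rw [if_neg h2p]; omega

/-- A monotone lattice path from the diagonal to `(p, q)`, in coordinate form. -/
def PathTo (k : ℕ) (β : Fin (k + 1) → ℕ × ℕ) (p q : ℕ) : Prop :=
  (∀ s, 1 ≤ (β s).1 ∧ (β s).1 ≤ (β s).2 ∧ (β s).2 ≤ q) ∧
  (β 0).1 = (β 0).2 ∧
  β (Fin.last k) = (p, q) ∧
  2 * (β 0).1 + k = p + q ∧
  ∀ v : ℕ, ∀ hv : v < k,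
    β ⟨v + 1, by omega⟩ = ((β ⟨v, by omega⟩).1, (β ⟨v, by omega⟩).2 + 1) ∨
    β ⟨v + 1, by omega⟩ = ((β ⟨v, by omega⟩).1 + 1, (β ⟨v, by omega⟩).2)

lemma snoc_val {α : Type*} {k : ℕ} (β : Fin (k + 1) → α) (x : α) (v : ℕ)
    (h : v < k + 1) (h' : v < k + 2) :
    (Fin.snoc β x : Fin (k + 2) → α) ⟨v, h'⟩ = β ⟨v, h⟩ := by
  have e : (⟨v, h'⟩ : Fin (k + 2)) = Fin.castSucc ⟨v, h⟩ := rfl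
  rw [e, Fin.snoc_castSucc]

lemma sum_snoc {k : ℕ} (β : Fin (k + 1) → ℕ × ℕ) (x : ℕ × ℕ) (z : ℕ × ℕ → ℤ) :
    ∑ s, z ((Fin.snoc β x : Fin (k + 2) → ℕ × ℕ) s) = (∑ s, z (β s)) + z x := by
  rw [Fin.sum_univ_castSucc]
  simp

lemma zero_eq (k : ℕ) : (0 : Fin (k + 1)) = ⟨0, by omega⟩ := by
  apply Fin.ext; simp

lemma snoc_zero {α : Type*} {k : ℕ} (β : Fin (k + 1) → α) (x : α) :
    (Fin.snoc β x : Fin (k + 2) → α) 0 = β 0 := by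
  have h0 : (0 : Fin (k + 2)) = Fin.castSucc (0 : Fin (k + 1)) := by apply Fin.ext; simp
  rw [h0, Fin.snoc_castSucc]

lemma pathTo_snoc {k : ℕ} {β : Fin (k + 1) → ℕ × ℕ} {p' q' p q : ℕ}
    (h : PathTo k β p' q')
    (hs : (p = p' ∧ q = q' + 1) ∨ (p = p' + 1 ∧ q = q')) (hpq : p ≤ q) :
    PathTo (k + 1) (Fin.snoc β (p, q)) p q := by
  obtain ⟨hel, h0, hlast, hlen, hstep⟩ := h
  have hp'1 : 1 ≤ p' := by
    have := hel (Fin.last k); rw [hlast] at this; exact this.1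
  have hq'q : q' ≤ q := by omega
  have hlastv : (Fin.snoc β (p, q) : Fin (k + 2) → ℕ × ℕ) ⟨k + 1, by omega⟩ = (p, q) := by
    have e : (⟨k + 1, by omega⟩ : Fin (k + 2)) = Fin.last (k + 1) := rfl
    rw [e, Fin.snoc_last]
  have hzero : (Fin.snoc β (p, q) : Fin (k + 2) → ℕ × ℕ) 0 = β 0 := snoc_zero β (p, q)
  refine ⟨?_, ?_, ?_, ?_, ?_⟩
  · intro s
    rcases s with ⟨v, hv⟩
    by_cases hvk : v < k + 1
    · rw [snoc_val β (p, q) v hvk hv]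
      have := hel ⟨v, hvk⟩
      exact ⟨this.1, this.2.1, le_trans this.2.2 hq'q⟩
    · have hv' : v = k + 1 := by omega
      subst hv'
      rw [hlastv]
      exact ⟨by omega, hpq, le_rfl⟩
  · rw [hzero]; exact h0
  · exact Fin.snoc_last _ _
  · rw [hzero]; omega
  · intro v hv
    by_cases hvk : v < k
    · rw [snoc_val β (p, q) (v + 1) (by omega) (by omega),
        snoc_val β (p, q) v (by omega) (by omega)]
      exact hstep v hvk
    · have hv' : v = k := by omega
      subst hv'
      rw [hlastv, snoc_val β (p, q) v (by omega) (by omega)]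
      have ek : (⟨v, by omega⟩ : Fin (v + 1)) = Fin.last v := rfl
      rw [ek, hlast]
      rcases hs with ⟨hp, hq⟩ | ⟨hp, hq⟩
      · left; simp [hp, hq]
      · right; simp [hp, hq]

/-- Existence of a maximizing path to `(p, q)`. -/
lemma exists_pathTo (z : ℕ × ℕ → ℤ) :
    ∀ m p q : ℕ, p + q = m → 1 ≤ p → p ≤ q →
      ∃ (k : ℕ) (β : Fin (k + 1) → ℕ × ℕ), PathTo k β p q ∧
        Hf z p q ≤ ((β 0).1 : ℤ) - 1 + ∑ s, z (β s) := by
  intro m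
  induction m using Nat.strong_induction_on with
  | _ m ih =>
    intro p q hm h1 h2
    have hq0 : ¬ q = 0 := by omega
    by_cases hpq : p = q
    · subst hpq
      by_cases hc : 2 ≤ p ∧ (p : ℤ) - 1 < Hf z (p - 1) p
      · obtain ⟨k, β, hβ, hval⟩ := ih (p - 1 + p) (by omega) (p - 1) p rfl (by omega) (by omega)
        have hH : Hf z p p = z (p, p) + Hf z (p - 1) p := by
          rw [Hf_eq, if_neg hq0, if_pos rfl, if_pos hc.1, max_eq_right (le_of_lt hc.2)]
        refine ⟨k + 1, Fin.snoc β (p, p), pathTo_snoc hβ (Or.inr ⟨by omega, rfl⟩) le_rfl, ?_⟩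
        rw [sum_snoc]
        have hzero : (Fin.snoc β (p, p) : Fin (k + 2) → ℕ × ℕ) 0 = β 0 := snoc_zero β (p, p)
        rw [hzero, hH]
        omega
      · have hH : Hf z p p ≤ z (p, p) + ((p : ℤ) - 1) := by
          rw [Hf_eq, if_neg hq0, if_pos rfl]
          by_cases h2p : 2 ≤ p
          · rw [if_pos h2p]
            have : Hf z (p - 1) p ≤ (p : ℤ) - 1 := by
              by_contra hcon
              exact hc ⟨h2p, by omega⟩
            omega
          · rw [if_neg h2p]
        refine ⟨0, fun _ => (p, p), ⟨fun s => ⟨h1, le_rfl, le_rfl⟩, rfl, rfl, ?_, ?_⟩, ?_⟩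
        · show 2 * p + 0 = p + p
          omega
        · intro v hv
          exact absurd hv (Nat.not_lt_zero v)
        · show Hf z p p ≤ (p : ℤ) - 1 + ∑ _s : Fin 1, z (p, p)
          have hsum : (∑ _s : Fin 1, z (p, p)) = z (p, p) := by simp
          omega
    · have hplt : p < q := by omega
      by_cases hc : 2 ≤ p ∧ Hf z p (q - 1) < Hf z (p - 1) q
      · obtain ⟨k, β, hβ, hval⟩ := ih (p - 1 + q) (by omega) (p - 1) q rfl (by omega) (by omega)
        have hH : Hf z p q = z (p, q) + Hf z (p - 1) q := by
          rw [Hf_eq, if_neg hq0, if_neg hpq, if_pos hc.1, max_eq_right (le_of_lt hc.2)]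
        refine ⟨k + 1, Fin.snoc β (p, q), pathTo_snoc hβ (Or.inr ⟨by omega, rfl⟩) (by omega), ?_⟩
        rw [sum_snoc]
        have hzero : (Fin.snoc β (p, q) : Fin (k + 2) → ℕ × ℕ) 0 = β 0 := snoc_zero β (p, q)
        rw [hzero, hH]
        omega
      · obtain ⟨k, β, hβ, hval⟩ := ih (p + (q - 1)) (by omega) p (q - 1) rfl h1 (by omega)
        have hH : Hf z p q ≤ z (p, q) + Hf z p (q - 1) := by
          rw [Hf_eq, if_neg hq0, if_neg hpq]
          by_cases h2p : 2 ≤ p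
          · rw [if_pos h2p]
            have : Hf z (p - 1) q ≤ Hf z p (q - 1) := by
              by_contra hcon
              exact hc ⟨h2p, by omega⟩
            omega
          · rw [if_neg h2p]
        refine ⟨k + 1, Fin.snoc β (p, q), pathTo_snoc hβ (Or.inl ⟨rfl, by omega⟩) (by omega), ?_⟩
        rw [sum_snoc]
        have hzero : (Fin.snoc β (p, q) : Fin (k + 2) → ℕ × ℕ) 0 = β 0 := snoc_zero β (p, q)
        rw [hzero]
        omega

/-- Extend a maximizing path for `(p,q)` down to the diagonal `(q,q)`. -/
lemma exists_pathTo_diag (n : ℕ) (z : ℕ × ℕ → ℤ)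
    (znn : ∀ p q : ℕ, 1 ≤ p → p ≤ q → q ≤ n - 1 → 0 ≤ z (p, q))
    {p q : ℕ} (h1 : 1 ≤ p) (h2 : p ≤ q) (h3 : q ≤ n - 1) :
    ∀ d : ℕ, p + d ≤ q →
      ∃ (k : ℕ) (β : Fin (k + 1) → ℕ × ℕ), PathTo k β (p + d) q ∧
        Hf z p q ≤ ((β 0).1 : ℤ) - 1 + ∑ s, z (β s) := by
  intro d
  induction d with
  | zero => intro _; exact exists_pathTo z (p + q) p q rfl h1 h2
  | succ d ihd =>
    intro hd
    obtain ⟨k, β, hβ, hval⟩ := ihd (by omega)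
    refine ⟨k + 1, Fin.snoc β (p + d + 1, q),
      ?_, ?_⟩
    · exact pathTo_snoc hβ (Or.inr ⟨rfl, rfl⟩) (by omega)
    · rw [sum_snoc]
      have hzero : (Fin.snoc β (p + d + 1, q) : Fin (k + 2) → ℕ × ℕ) 0 = β 0 :=
        snoc_zero β (p + d + 1, q)
      rw [hzero]
      have : 0 ≤ z (p + d + 1, q) := znn (p + d + 1) q (by omega) (by omega) h3
      omega

lemma dyck_step {n k : ℕ} {β : Fin (k + 1) → ℕ × ℕ} (hβ : IsDyckPath n k β)
    (v : ℕ) (hv : v < k) :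
    β ⟨v + 1, by omega⟩ = ((β ⟨v, by omega⟩).1, (β ⟨v, by omega⟩).2 + 1) ∨
    β ⟨v + 1, by omega⟩ = ((β ⟨v, by omega⟩).1 + 1, (β ⟨v, by omega⟩).2) := by
  have h := hβ.2.2.2.2 ⟨v, hv⟩
  have e1 : (⟨v, hv⟩ : Fin k).succ = (⟨v + 1, by omega⟩ : Fin (k + 1)) := rfl
  have e2 : (⟨v, hv⟩ : Fin k).castSucc = (⟨v, by omega⟩ : Fin (k + 1)) := rfl
  rw [e1, e2] at h
  exact h

/-- Coordinates are monotone along a Dyck path. -/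
lemma dyck_mono {n k : ℕ} {β : Fin (k + 1) → ℕ × ℕ} (hβ : IsDyckPath n k β) :
    ∀ v : ℕ, ∀ hv : v < k + 1, ∀ u : ℕ, ∀ hu : u ≤ v,
      (β ⟨u, by omega⟩).1 ≤ (β ⟨v, hv⟩).1 ∧ (β ⟨u, by omega⟩).2 ≤ (β ⟨v, hv⟩).2 := by
  intro v
  induction v with
  | zero =>
    intro hv u hu
    have : u = 0 := by omega
    subst this
    exact ⟨le_rfl, le_rfl⟩
  | succ v ihv =>
    intro hv u hu
    have hstep := dyck_step hβ v (by omega)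
    by_cases huv : u = v + 1
    · subst huv; exact ⟨le_rfl, le_rfl⟩
    · have h2 := ihv (by omega) u (by omega)
      rcases hstep with h | h
      · rw [h]
        exact ⟨h2.1, le_trans h2.2 (Nat.le_succ _)⟩
      · rw [h]
        exact ⟨le_trans h2.1 (Nat.le_succ _), h2.2⟩

/-- Chain lemma: `Hf` increases by at least `z` between comparable points on a Dyck path. -/
lemma Hf_chain {n k : ℕ} {β : Fin (k + 1) → ℕ × ℕ} (hβ : IsDyckPath n k β)
    (z : ℕ × ℕ → ℤ)
    (znn : ∀ p q : ℕ, 1 ≤ p → p ≤ q → q ≤ n - 1 → 0 ≤ z (p, q)) :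
    ∀ v : ℕ, ∀ hv : v < k + 1, ∀ u : ℕ, ∀ hu : u < v,
      Hf z (β ⟨u, by omega⟩).1 (β ⟨u, by omega⟩).2 + z (β ⟨v, hv⟩) ≤
        Hf z (β ⟨v, hv⟩).1 (β ⟨v, hv⟩).2 := by
  intro v
  induction v with
  | zero => intro _ u hu; omega
  | succ v ihv =>
    intro hv u hu
    have hstep := dyck_step hβ v (by omega)
    have hvvalid := hβ.1 ⟨v, by omega⟩
    have hv1valid := hβ.1 ⟨v + 1, hv⟩
    have hone : Hf z (β ⟨v, by omega⟩).1 (β ⟨v, by omega⟩).2 + z (β ⟨v + 1, hv⟩) ≤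
        Hf z (β ⟨v + 1, hv⟩).1 (β ⟨v + 1, hv⟩).2 := by
      rcases hstep with h | h
      · refine Hf_step z hvvalid.1 hvvalid.2.1 (Or.inl ⟨?_, ?_⟩) hv1valid.2.1 <;> rw [h]
      · refine Hf_step z hvvalid.1 hvvalid.2.1 (Or.inr ⟨?_, ?_⟩) hv1valid.2.1 <;> rw [h]
    rcases Nat.lt_or_ge u v with huv | huv
    · have h2 := ihv (by omega) u huv
      have hz0 : 0 ≤ z (β ⟨v, by omega⟩) :=
        znn _ _ hvvalid.1 hvvalid.2.1 hvvalid.2.2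
      have : z (β ⟨v, by omega⟩) = z ((β ⟨v, by omega⟩).1, (β ⟨v, by omega⟩).2) := by
        simp
      omega
    · have : u = v := by omega
      subst this
      exact hone

end FFLVAux

open FFLVAux in
/-- The weak Minkowski property of the FFLV polytope `P(ρ)`: every lattice point of
`P(1,…,1)` is a sum of lattice points of the fundamental FFLV polytopes `P(e_i)`,
`1 ≤ i ≤ n-1`. -/
theorem fflv_weak_minkowski (n : ℕ) (hn : 2 ≤ n) (z : ℕ × ℕ → ℤ)
    (hz : InFFLV n (fun _ => 1) fun pq => (z pq : ℝ)) :
    ∃ zi : ℕ → ℕ × ℕ → ℤ,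
      (∀ i ∈ Finset.Icc 1 (n - 1),
        InFFLV n (fun t => if t = i then 1 else 0) fun pq => (zi i pq : ℝ)) ∧
      ∀ p q : ℕ, 1 ≤ p → p ≤ q → q ≤ n - 1 →
        z (p, q) = ∑ i ∈ Finset.Icc 1 (n - 1), zi i (p, q) := by
  have znn : ∀ p q : ℕ, 1 ≤ p → p ≤ q → q ≤ n - 1 → 0 ≤ z (p, q) := by
    intro p q h1 h2 h3
    have h := hz.1 p q h1 h2 h3
    exact_mod_cast (show (0 : ℝ) ≤ (z (p, q) : ℝ) from h)
  -- the Dyck-path bound for z, in ℤ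
  have dyck_bound : ∀ (k : ℕ) (β : Fin (k + 1) → ℕ × ℕ), IsDyckPath n k β →
      ∑ s, z (β s) ≤ ((β (Fin.last k)).1 : ℤ) - ((β 0).1 : ℤ) + 1 := by
    intro k β hβ
    have h := hz.2 k β hβ
    have hab : (β 0).1 ≤ (β (Fin.last k)).1 := by
      rcases Nat.eq_zero_or_pos k with hk | hk
      · subst hk; rfl
      · exact le_of_lt (hβ.2.2.2.1 hk)
    have h' : (∑ s, (z (β s) : ℝ)) ≤
        ∑ t ∈ Finset.Icc (β 0).1 (β (Fin.last k)).1, (1 : ℝ) := h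
    rw [Finset.sum_const, Nat.card_Icc, nsmul_eq_mul, mul_one] at h'
    have h2 : ((∑ s, z (β s) : ℤ) : ℝ) ≤ (((β (Fin.last k)).1 + 1 - (β 0).1 : ℕ) : ℝ) := by
      push_cast
      push_cast at h'
      convert h' using 2
    have h3 : (∑ s, z (β s) : ℤ) ≤ (((β (Fin.last k)).1 + 1 - (β 0).1 : ℕ) : ℤ) := by
      exact_mod_cast h2
    omega
  -- upper bound on Hf
  have Hub : ∀ p q : ℕ, 1 ≤ p → p ≤ q → q ≤ n - 1 → Hf z p q ≤ (q : ℤ) := by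
    intro p q h1 h2 h3
    obtain ⟨k, β, hβ, hval⟩ := exists_pathTo_diag n z znn h1 h2 h3 (q - p) (by omega)
    have hqq : p + (q - p) = q := by omega
    rw [hqq] at hβ
    obtain ⟨hel, h0, hlast, hlen, hstep⟩ := hβ
    have hd : IsDyckPath n k β := by
      refine ⟨fun s => ⟨(hel s).1, (hel s).2.1, le_trans (hel s).2.2 h3⟩, h0, ?_, ?_, ?_⟩
      · rw [hlast]
      · intro hk
        rw [hlast]
        omega
      · intro s
        have := hstep s.val s.isLt
        have e1 : s.succ = (⟨s.val + 1, by omega⟩ : Fin (k + 1)) := rfl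
        have e2 : s.castSucc = (⟨s.val, by omega⟩ : Fin (k + 1)) := rfl
        rw [e1, e2]
        exact this
    have hb := dyck_bound k β hd
    rw [hlast] at hb
    omega
  have Hlb := Hf_lb n z znn
  -- the decomposition
  refine ⟨fun i pq =>
    if 1 ≤ pq.1 ∧ pq.1 ≤ pq.2 ∧ pq.2 ≤ n - 1 ∧
        Hf z pq.1 pq.2 - z pq < (i : ℤ) ∧ (i : ℤ) ≤ Hf z pq.1 pq.2 then 1 else 0,
    ?_, ?_⟩
  · -- membership in P(e_i)
    intro i hi
    constructor
    · intro p q h1 h2 h3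
      show (0 : ℝ) ≤ ((if 1 ≤ p ∧ p ≤ q ∧ q ≤ n - 1 ∧
          Hf z p q - z (p, q) < (i : ℤ) ∧ (i : ℤ) ≤ Hf z p q then (1 : ℤ) else 0 : ℤ) : ℝ)
      split <;> norm_num
    · intro k β hβ
      show (∑ s : Fin (k + 1), ((if 1 ≤ (β s).1 ∧ (β s).1 ≤ (β s).2 ∧ (β s).2 ≤ n - 1 ∧
          Hf z (β s).1 (β s).2 - z (β s) < (i : ℤ) ∧ (i : ℤ) ≤ Hf z (β s).1 (β s).2
          then (1 : ℤ) else 0 : ℤ) : ℝ)) ≤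
        ∑ t ∈ Finset.Icc (β 0).1 (β (Fin.last k)).1, (if t = i then (1 : ℝ) else 0)
      have hRHS : ∑ t ∈ Finset.Icc (β 0).1 (β (Fin.last k)).1,
          (if t = i then (1 : ℝ) else 0) =
          if i ∈ Finset.Icc (β 0).1 (β (Fin.last k)).1 then (1 : ℝ) else 0 :=
        Finset.sum_ite_eq' (Finset.Icc (β 0).1 (β (Fin.last k)).1) i (fun _ => (1 : ℝ))
      rw [hRHS]
      by_cases hex : ∃ s : Fin (k + 1),
          1 ≤ (β s).1 ∧ (β s).1 ≤ (β s).2 ∧ (β s).2 ≤ n - 1 ∧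
            Hf z (β s).1 (β s).2 - z (β s) < (i : ℤ) ∧ (i : ℤ) ≤ Hf z (β s).1 (β s).2
      · obtain ⟨s0, hc0⟩ := hex
        have hlow : ((β s0).1 : ℤ) - 1 ≤ Hf z (β s0).1 (β s0).2 - z (β s0) := by
          have h := Hlb (β s0).2 (β s0).1 hc0.1 hc0.2.1 hc0.2.2.1
          have hzz : z ((β s0).1, (β s0).2) = z (β s0) := rfl
          omega
        have hip : (β s0).1 ≤ i := by
          have := hc0.2.2.2.1
          omega
        have hiq : i ≤ (β s0).2 := by
          have h := Hub (β s0).1 (β s0).2 hc0.1 hc0.2.1 hc0.2.2.1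
          have := hc0.2.2.2.2
          omega
        have hmono1 : (β 0).1 ≤ (β s0).1 := by
          have h := (dyck_mono hβ s0.val s0.isLt 0 (Nat.zero_le _)).1
          have e0 : (⟨0, by omega⟩ : Fin (k + 1)) = 0 := (zero_eq k).symm
          rw [e0] at h
          exact h
        have hmono2 : (β s0).2 ≤ (β (Fin.last k)).2 := by
          have h := (dyck_mono hβ k (by omega) s0.val (by omega)).2
          exact h
        have hlast12 : (β (Fin.last k)).1 = (β (Fin.last k)).2 := hβ.2.2.1
        have himem : i ∈ Finset.Icc (β 0).1 (β (Fin.last k)).1 := by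
          rw [Finset.mem_Icc]
          exact ⟨le_trans hmono1 hip, by rw [hlast12]; exact le_trans hiq hmono2⟩
        rw [if_pos himem]
        -- at most one s satisfies the condition
        have huniq : ∀ s : Fin (k + 1), s ≠ s0 →
            ¬(1 ≤ (β s).1 ∧ (β s).1 ≤ (β s).2 ∧ (β s).2 ≤ n - 1 ∧
              Hf z (β s).1 (β s).2 - z (β s) < (i : ℤ) ∧
              (i : ℤ) ≤ Hf z (β s).1 (β s).2) := by
          intro s hne hc
          have hvne : s.val ≠ s0.val := fun h => hne (Fin.ext h)
          rcases Nat.lt_or_ge s.val s0.val with hlt | hge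
          · have hch : Hf z (β s).1 (β s).2 + z (β s0) ≤ Hf z (β s0).1 (β s0).2 :=
              Hf_chain hβ z znn s0.val s0.isLt s.val hlt
            have h4 := hc.2.2.2.2
            have h5 := hc0.2.2.2.1
            omega
          · have hlt : s0.val < s.val := by omega
            have hch : Hf z (β s0).1 (β s0).2 + z (β s) ≤ Hf z (β s).1 (β s).2 :=
              Hf_chain hβ z znn s.val s.isLt s0.val hlt
            have h4 := hc0.2.2.2.2
            have h5 := hc.2.2.2.1
            omega
        calc ∑ s : Fin (k + 1), ((if 1 ≤ (β s).1 ∧ (β s).1 ≤ (β s).2 ∧ (β s).2 ≤ n - 1 ∧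
              Hf z (β s).1 (β s).2 - z (β s) < (i : ℤ) ∧ (i : ℤ) ≤ Hf z (β s).1 (β s).2
              then (1 : ℤ) else 0 : ℤ) : ℝ)
            ≤ ∑ s : Fin (k + 1), (if s = s0 then (1 : ℝ) else 0) := by
              apply Finset.sum_le_sum
              intro s _
              by_cases hse : s = s0
              · rw [if_pos hse]
                split <;> norm_num
              · rw [if_neg hse, if_neg (huniq s hse)]
                norm_num
          _ = 1 := by
              rw [Finset.sum_ite_eq' Finset.univ s0 (fun _ => (1 : ℝ))]
              simp
      · push_neg at hex
        have hall : ∀ s : Fin (k + 1),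
            ((if 1 ≤ (β s).1 ∧ (β s).1 ≤ (β s).2 ∧ (β s).2 ≤ n - 1 ∧
              Hf z (β s).1 (β s).2 - z (β s) < (i : ℤ) ∧ (i : ℤ) ≤ Hf z (β s).1 (β s).2
              then (1 : ℤ) else 0 : ℤ) : ℝ) = 0 := by
          intro s
          rw [if_neg]
          · norm_num
          · intro hc
            exact absurd hc.2.2.2.2 (not_le.mpr (hex s hc.1 hc.2.1 hc.2.2.1 hc.2.2.2.1))
        rw [Finset.sum_eq_zero (fun s _ => hall s)]
        split <;> norm_num
  · -- the sum decomposition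
    intro p q h1 h2 h3
    show z (p, q) = ∑ i ∈ Finset.Icc 1 (n - 1),
      (if 1 ≤ p ∧ p ≤ q ∧ q ≤ n - 1 ∧
        Hf z p q - z (p, q) < (i : ℤ) ∧ (i : ℤ) ≤ Hf z p q then (1 : ℤ) else 0)
    have hA : (p : ℤ) - 1 + z (p, q) ≤ Hf z p q := Hlb q p h1 h2 h3
    have hB : Hf z p q ≤ (q : ℤ) := Hub p q h1 h2 h3
    have hz0 : 0 ≤ z (p, q) := znn p q h1 h2 h3
    simp only [h1, h2, h3, true_and]
    have hfilter : (Finset.Icc 1 (n - 1)).filter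
        (fun i : ℕ => Hf z p q - z (p, q) < (i : ℤ) ∧ (i : ℤ) ≤ Hf z p q) =
        Finset.Icc ((Hf z p q - z (p, q)).toNat + 1) (Hf z p q).toNat := by
      ext j
      simp only [Finset.mem_filter, Finset.mem_Icc]
      omega
    rw [Finset.sum_boole, hfilter, Nat.card_Icc]
    omega
end

section
/- For (m_1,m_2,m_3) ∈ ℝ³_{≥0} let P(m_1,m_2,m_3) ⊆ ℝ⁶ be the polytope of points (r_1,r_2,r_3,r_{12},r_{23},r_{13}) with all six coordinates ≥ 0 satisfying r_1 ≤ m_1, r_2 ≤ m_2, r_3 ≤ m_3, r_1+r_{12}+r_2 ≤ m_1+m_2, r_2+r_{23}+r_3 ≤ m_2+m_3, r_1+r_{12}+r_2+r_{23}+r_3 ≤ m_1+m_2+m_3, and r_1+r_{12}+r_{13}+r_{23}+r_3 ≤ m_1+m_2+m_3. Then every lattice point z ∈ P(1,1,1) ∩ ℤ⁶ can be written as z = z_1 + z_2 + z_3 with z_1 ∈ P(1,0,0) ∩ ℤ⁶, z_2 ∈ P(0,1,0) ∩ ℤ⁶ and z_3 ∈ P(0,0,1) ∩ ℤ⁶.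 -/
/-- The FFLV polytope `P(m₁,m₂,m₃)` of `Flag₄` in `ℝ⁶`, with coordinates
`(r₁, r₂, r₃, r₁₂, r₂₃, r₁₃)` indexed by `0,…,5`. -/
def FFLVPolytope4 (m1 m2 m3 : ℝ) : Set (Fin 6 → ℝ) :=
  {r | (∀ i, 0 ≤ r i) ∧
    r 0 ≤ m1 ∧ r 1 ≤ m2 ∧ r 2 ≤ m3 ∧
    r 0 + r 3 + r 1 ≤ m1 + m2 ∧
    r 1 + r 4 + r 2 ≤ m2 + m3 ∧
    r 0 + r 3 + r 1 + r 4 + r 2 ≤ m1 + m2 + m3 ∧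
    r 0 + r 3 + r 5 + r 4 + r 2 ≤ m1 + m2 + m3}

/-!
Write `z = (r₁, r₂, r₃, r₁₂, r₂₃, r₁₃)`. The lattice points of `P(1,0,0)`, `P(0,1,0)`, `P(0,0,1)`
are the nonnegative vectors `(a,0,0,d,0,f)` with `a + d + f ≤ 1`, `(0,b,0,d,e,f)` with
`b + d + e ≤ 1` and `d + e + f ≤ 1`, and `(0,0,c,0,e,f)` with `c + e + f ≤ 1`. So `r₁, r₂, r₃`
go to the first, second and third summand, and `r₁₂, r₂₃, r₁₃` are distributed greedily:
`r₁₂` fills the room `1 - r₁` of the first summand and `r₂₃` the room `1 - r₃` of the third,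
their remainders go to the second, which then holds at most `1` by the three constraints
involving `r₂`. Finally `r₁₃` fills the remaining room of the three summands, whose total
`3 - r₁ - r₁₂ - r₂₃ - r₃` bounds `r₁₃` by the last constraint.
-/

theorem exists_greedy_add_eq {α : Type*} [AddCommGroup α] [LinearOrder α] [IsOrderedAddMonoid α]
    {n u : α} (hn : 0 ≤ n) (hu : 0 ≤ u) :
    ∃ x y, 0 ≤ x ∧ 0 ≤ y ∧ x ≤ u ∧ x + y = n ∧ (y = 0 ∨ x = u) := by
  rcases le_total n u with h | h
  · exact ⟨n, 0, hn, le_rfl, h, add_zero n, .inl rfl⟩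
  · exact ⟨u, n - u, hu, sub_nonneg.2 h, le_rfl, add_sub_cancel u n, .inr rfl⟩

theorem intCast_mem_FFLVPolytope4_iff {z : Fin 6 → ℤ} {m₁ m₂ m₃ : ℤ} :
    (fun i => (z i : ℝ)) ∈ FFLVPolytope4 m₁ m₂ m₃ ↔
      (∀ i, 0 ≤ z i) ∧ z 0 ≤ m₁ ∧ z 1 ≤ m₂ ∧ z 2 ≤ m₃ ∧
        z 0 + z 3 + z 1 ≤ m₁ + m₂ ∧ z 1 + z 4 + z 2 ≤ m₂ + m₃ ∧
        z 0 + z 3 + z 1 + z 4 + z 2 ≤ m₁ + m₂ + m₃ ∧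
        z 0 + z 3 + z 5 + z 4 + z 2 ≤ m₁ + m₂ + m₃ := by
  simp only [FFLVPolytope4, Set.mem_ofPred_eq]
  norm_cast

theorem vec_mem_FFLVPolytope4_one_zero_zero {a d f : ℤ} (ha : 0 ≤ a) (hd : 0 ≤ d) (hf : 0 ≤ f)
    (h : a + d + f ≤ 1) :
    (fun i => ((![a, 0, 0, d, 0, f] : Fin 6 → ℤ) i : ℝ)) ∈ FFLVPolytope4 1 0 0 := by
  exact_mod_cast intCast_mem_FFLVPolytope4_iff (m₁ := 1) (m₂ := 0) (m₃ := 0) |>.2 <| by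
    simp only [Fin.forall_fin_succ, Matrix.cons_val_zero, Matrix.cons_val_succ, Matrix.cons_val_one,
      Matrix.cons_val, Matrix.cons_val_fin_one, forall_const, add_zero]
    omega

theorem vec_mem_FFLVPolytope4_zero_one_zero {b d e f : ℤ} (hb : 0 ≤ b) (hd : 0 ≤ d) (he : 0 ≤ e)
    (hf : 0 ≤ f) (h : b + d + e ≤ 1) (h' : d + e + f ≤ 1) :
    (fun i => ((![0, b, 0, d, e, f] : Fin 6 → ℤ) i : ℝ)) ∈ FFLVPolytope4 0 1 0 := by
  exact_mod_cast intCast_mem_FFLVPolytope4_iff (m₁ := 0) (m₂ := 1) (m₃ := 0) |>.2 <| by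
    simp only [Fin.forall_fin_succ, Matrix.cons_val_zero, Matrix.cons_val_succ, Matrix.cons_val_one,
      Matrix.cons_val, Matrix.cons_val_fin_one, forall_const, add_zero, zero_add]
    omega

theorem vec_mem_FFLVPolytope4_zero_zero_one {c e f : ℤ} (hc : 0 ≤ c) (he : 0 ≤ e) (hf : 0 ≤ f)
    (h : c + e + f ≤ 1) :
    (fun i => ((![0, 0, c, 0, e, f] : Fin 6 → ℤ) i : ℝ)) ∈ FFLVPolytope4 0 0 1 := by
  exact_mod_cast intCast_mem_FFLVPolytope4_iff (m₁ := 0) (m₂ := 0) (m₃ := 1) |>.2 <| by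
    simp only [Fin.forall_fin_succ, Matrix.cons_val_zero, Matrix.cons_val_succ, Matrix.cons_val_one,
      Matrix.cons_val, Matrix.cons_val_fin_one, forall_const, add_zero, zero_add]
    omega

/-- The weak Minkowski property of the FFLV polytope of `Flag₄` for `ρ`: every lattice point
of `P(1,1,1)` is the sum of lattice points of `P(1,0,0)`, `P(0,1,0)` and `P(0,0,1)`. -/
theorem fflv4_weak_minkowski (z : Fin 6 → ℤ)
    (hz : (fun i => (z i : ℝ)) ∈ FFLVPolytope4 1 1 1) :
    ∃ z1 z2 z3 : Fin 6 → ℤ,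
      (fun i => (z1 i : ℝ)) ∈ FFLVPolytope4 1 0 0 ∧
      (fun i => (z2 i : ℝ)) ∈ FFLVPolytope4 0 1 0 ∧
      (fun i => (z3 i : ℝ)) ∈ FFLVPolytope4 0 0 1 ∧
      z = z1 + z2 + z3 := by
  obtain ⟨hz_nonneg, h1, h2, h3, h12, h23, h123, h13⟩ :=
    intCast_mem_FFLVPolytope4_iff (m₁ := 1) (m₂ := 1) (m₃ := 1) |>.1 (by exact_mod_cast hz)
  have hr₁ := hz_nonneg 0
  have hr₂ := hz_nonneg 1
  have hr₃ := hz_nonneg 2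
  obtain ⟨d₁, d₂, hd₁, hd₂, hd₁_le, hd, hd_greedy⟩ :=
    exists_greedy_add_eq (hz_nonneg 3) (show 0 ≤ 1 - z 0 by omega)
  obtain ⟨e₃, e₂, he₃, he₂, he₃_le, he, he_greedy⟩ :=
    exists_greedy_add_eq (hz_nonneg 4) (show 0 ≤ 1 - z 2 by omega)
  have h_room : z 1 + d₂ + e₂ ≤ 1 := by omega
  obtain ⟨f₁, g, hf₁, hg, hf₁_le, hf, hf_greedy⟩ :=
    exists_greedy_add_eq (hz_nonneg 5) (show 0 ≤ 1 - z 0 - d₁ by omega)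
  obtain ⟨f₂, f₃, hf₂, hf₃, hf₂_le, hg_eq, hg_greedy⟩ :=
    exists_greedy_add_eq hg (show 0 ≤ 1 - d₂ - e₂ by omega)
  refine ⟨![z 0, 0, 0, d₁, 0, f₁], ![0, z 1, 0, d₂, e₂, f₂], ![0, 0, z 2, 0, e₃, f₃],
    vec_mem_FFLVPolytope4_one_zero_zero hr₁ hd₁ hf₁ (by omega),
    vec_mem_FFLVPolytope4_zero_one_zero hr₂ hd₂ he₂ hf₂ h_room (by omega),
    vec_mem_FFLVPolytope4_zero_zero_one hr₃ he₃ hf₃ (by omega), ?_⟩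
  ext i
  fin_cases i <;> simp only [Fin.isValue, Pi.add_apply, Matrix.cons_val, Matrix.cons_val_zero,
    Matrix.cons_val_one, Fin.zero_eta, Fin.mk_one, Fin.reduceFinMk, add_zero, zero_add] <;> omega
end

section
/- Let I' = ⟨xy + xz + yz, u − x − y⟩ ⊂ ℂ[x,y,z,u]. Then init_{(0,0,−1,1)}(I') = ⟨x + y, xy + zu⟩, and this ideal is a prime ideal generated by binomials; in particular its intersection with ℂ[x,y,z] contains the non-prime initial ideal ⟨xz + yz⟩ = init_{(0,0,−1)}(⟨xy + xz + yz⟩). -/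
open MvPolynomial

/-- The weight of a monomial exponent `u` with respect to a weight vector `w`. -/
noncomputable def wt {N : ℕ} (w : Fin N → ℝ) (u : Fin N →₀ ℕ) : ℝ :=
  ∑ i, w i * (u i : ℝ)

open Classical in
/-- The initial form of a polynomial `f` with respect to a weight vector `w`:
the sum of the terms whose weight is minimal among the terms of `f`. -/
noncomputable def initialForm {N : ℕ} (w : Fin N → ℝ) (f : MvPolynomial (Fin N) ℂ) :
    MvPolynomial (Fin N) ℂ :=
  ∑ u ∈ f.support, if ∀ v ∈ f.support, wt w u ≤ wt w v then monomial u (coeff u f) else 0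

/-- The initial ideal of `I` with respect to a weight vector `w`. -/
noncomputable def initialIdeal {N : ℕ} (w : Fin N → ℝ) (I : Ideal (MvPolynomial (Fin N) ℂ)) :
    Ideal (MvPolynomial (Fin N) ℂ) :=
  Ideal.span {g | ∃ f ∈ I, f ≠ 0 ∧ g = initialForm w f}

/-- An ideal is binomial if it is generated by polynomials with at most two terms. -/
def IsBinomialIdeal {N : ℕ} (I : Ideal (MvPolynomial (Fin N) ℂ)) : Prop :=
  ∃ S : Set (MvPolynomial (Fin N) ℂ), I = Ideal.span S ∧ ∀ f ∈ S, f.support.card ≤ 2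

/-!
Grade `ℂ[x,y,z,u]` by the weight `w = (0,0,-1,1)` and write `π_k` for the component of
weight `k`. Since `xy + xz + yz = (xy + zu) - z (u - x - y)`, every element of `I'` has the form
`f = a F + p (u - s)` with `F = xy + zu` and `s = x + y` homogeneous of weight `0` and `u` of
weight `1`. If `m` is the least weight of `f`, then for `i < m` the weight-`i` part of this
identity reads `π_i(p) s ≡ π_{i-1}(p) u (mod F)`. As `F` is prime and does not divide `s`,
induction from the bottom gives `F ∣ π_i(p)` for all `i < m`, so
`init f = π_m(a) F + π_{m-1}(p) u - π_m(p) s ∈ ⟨F, s⟩`.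

The ideal `⟨x + y, xy + zu⟩` is prime because killing `x + y` turns `xy + zu` into `zu - x²`,
which is linear in `z` with coprime coefficients. In three variables, initial forms are
multiplicative, so the initial ideal of a principal ideal is generated by the initial form of the
generator.
-/

theorem Ideal.comap_eq_of_sub_mem {A B : Type*} [CommRing A] [CommRing B] {φ : A →+* B}
    {σ : B →+* A} {J : Ideal A} {P : Ideal B} (hJ : J.map φ ≤ P) (hP : P.map σ ≤ J)
    (hσφ : ∀ a, a - σ (φ a) ∈ J) : P.comap φ = J := by
  refine le_antisymm (fun a ha => ?_) (Ideal.map_le_iff_le_comap.mp hJ)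
  rw [← sub_add_cancel a (σ (φ a))]
  exact add_mem (hσφ a) (hP (Ideal.mem_map_of_mem σ ha))

theorem Prime.dvd_of_forall_dvd_mul_sub_mul {A : Type*} [CommRing A] {F s u : A} (hF : Prime F)
    (hFs : ¬ F ∣ s) {q : ℝ → A} {δ k₀ m : ℝ} (hδ : 0 < δ) (hq : ∀ i < k₀, q i = 0)
    (hrec : ∀ i < m, F ∣ q i * s - q (i - δ) * u) : ∀ i < m, F ∣ q i := by
  suffices ∀ j : ℕ, ∀ i < m, i < k₀ + j * δ → F ∣ q i by
    intro i hi
    obtain ⟨j, hj⟩ := exists_nat_gt ((i - k₀) / δ)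
    exact this j i hi (by rw [div_lt_iff₀ hδ] at hj; linarith)
  intro j
  induction j with
  | zero => exact fun i _ hi => by simp [hq i (by simpa using hi)]
  | succ j ih =>
    intro i hi hij
    have h₁ : F ∣ q (i - δ) := ih _ (by linarith) (by push_cast at hij; linarith)
    have h₂ : F ∣ q i * s := by simpa using dvd_add (hrec i hi) (h₁.mul_right u)
    exact (hF.dvd_or_dvd h₂).resolve_right hFs

namespace MvPolynomial

section Basic

variable {σ R : Type*} [CommSemiring R]

theorem card_support_add_le (p q : MvPolynomial σ R) :
    (p + q).support.card ≤ p.support.card + q.support.card := by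
  classical
  exact (Finset.card_le_card support_add).trans (Finset.card_union_le _ _)

theorem not_dvd_of_eval_eq_zero {p q : MvPolynomial σ R} (x : σ → R) (hp : eval x p = 0)
    (hq : eval x q ≠ 0) : ¬ p ∣ q :=
  fun h => hq (zero_dvd_iff.mp (hp ▸ map_dvd (eval x) h))

theorem finSuccEquiv_rename_succ {n : ℕ} (a : MvPolynomial (Fin n) R) :
    finSuccEquiv R n (rename Fin.succ a) = Polynomial.C a := by
  induction a using MvPolynomial.induction_on with
  | C r => simp [finSuccEquiv_apply]
  | add p q hp hq => simp [hp, hq]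
  | mul_X p i hp => simp [hp, finSuccEquiv_X_succ]

end Basic

theorem prime_X_zero_mul_rename_succ_add {R : Type*} [CommRing R] [IsDomain R]
    [UniqueFactorizationMonoid R] {n : ℕ} {a b : MvPolynomial (Fin n) R} (ha : Prime a)
    (hab : ¬ a ∣ b) : Prime (X 0 * rename Fin.succ a + rename Fin.succ b) := by
  rw [← MulEquiv.prime_iff (finSuccEquiv R n).toMulEquiv]
  change Prime (finSuccEquiv R n _)
  rw [map_add, map_mul, finSuccEquiv_X_zero, finSuccEquiv_rename_succ, finSuccEquiv_rename_succ,
    mul_comm, ← UniqueFactorizationMonoid.irreducible_iff_prime]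
  exact Polynomial.irreducible_C_mul_X_add_C ha.ne_zero
    (ha.irreducible.isRelPrime_iff_not_dvd.mpr hab)

section WeightedHomogeneousComponent

variable {σ R M : Type*} [CommSemiring R] {w : σ → M}

theorem weightedHomogeneousComponent_mul_of_isWeightedHomogeneous [AddCommGroup M]
    {φ : MvPolynomial σ R} {n : M} (hφ : φ.IsWeightedHomogeneous w n) (k : M)
    (ψ : MvPolynomial σ R) :
    weightedHomogeneousComponent w k (ψ * φ) =
      weightedHomogeneousComponent w (k - n) ψ * φ := by
  classical
  let _ := weightedGradedAlgebra R w
  have := DirectSum.coe_decompose_mul_add_of_right_mem (weightedHomogeneousSubmodule R w)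
    (i := k - n) (a := ψ) hφ
  rw [sub_add_cancel] at this
  rw [← weightedDecomposition.decompose'_apply, ← weightedDecomposition.decompose'_apply]
  exact this

theorem sum_weightedHomogeneousComponent_image [AddCommMonoid M] [DecidableEq M]
    (φ : MvPolynomial σ R) :
    ∑ m ∈ φ.support.image (Finsupp.weight w), weightedHomogeneousComponent w m φ = φ := by
  rw [← finsum_eq_sum_of_support_subset, sum_weightedHomogeneousComponent]
  intro m hm
  by_contra h
  exact hm (weightedHomogeneousComponent_eq_zero_of_notMem w φ m h)

def IsLeastWeight [AddCommMonoid M] [LT M] (w : σ → M) (φ : MvPolynomial σ R) (m : M) : Prop :=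
  weightedHomogeneousComponent w m φ ≠ 0 ∧ ∀ k < m, weightedHomogeneousComponent w k φ = 0

section LinearOrder

variable [AddCommMonoid M] [LinearOrder M] {φ : MvPolynomial σ R} {m : M}

theorem IsLeastWeight.ne_zero (h : IsLeastWeight w φ m) : φ ≠ 0 := by
  rintro rfl
  exact h.1 (map_zero _)

theorem IsLeastWeight.le_weight (h : IsLeastWeight w φ m) {d : σ →₀ ℕ}
    (hd : d ∈ φ.support) : m ≤ Finsupp.weight w d := by
  classical
  by_contra! hlt
  have := congrArg (coeff d) (h.2 _ hlt)
  rw [coeff_weightedHomogeneousComponent, if_pos rfl, coeff_zero] at this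
  exact mem_support_iff.mp hd this

theorem IsLeastWeight.exists_mem_support (h : IsLeastWeight w φ m) :
    ∃ d ∈ φ.support, Finsupp.weight w d = m := by
  classical
  obtain ⟨d, hd⟩ := support_nonempty.mpr h.1
  rw [support_weightedHomogeneousComponent, Finset.mem_filter] at hd
  exact ⟨d, hd⟩

theorem exists_isLeastWeight (hφ : φ ≠ 0) : ∃ m, IsLeastWeight w φ m := by
  classical
  obtain ⟨d, hd, hmin⟩ :=
    φ.support.exists_min_image (Finsupp.weight w) (support_nonempty.mpr hφ)
  refine ⟨Finsupp.weight w d, fun h => ?_, fun k hk => ?_⟩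
  · have := congrArg (coeff d) h
    rw [coeff_weightedHomogeneousComponent, if_pos rfl, coeff_zero] at this
    exact mem_support_iff.mp hd this
  · exact weightedHomogeneousComponent_eq_zero' _ _ fun d' hd' => (hk.trans_le (hmin d' hd')).ne'

theorem IsWeightedHomogeneous.isLeastWeight (hφ : φ.IsWeightedHomogeneous w m) (hφ0 : φ ≠ 0) :
    IsLeastWeight w φ m :=
  ⟨by rwa [hφ.weightedHomogeneousComponent_same],
    fun _ hk => hφ.weightedHomogeneousComponent_ne _ hk.ne⟩

theorem isLeastWeight_add_of_isWeightedHomogeneous {H E : MvPolynomial σ R} {n : M}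
    (hH : H.IsWeightedHomogeneous w m) (hH0 : H ≠ 0) (hE : E.IsWeightedHomogeneous w n)
    (hmn : m < n) : IsLeastWeight w (H + E) m := by
  refine ⟨?_, fun k hk => ?_⟩
  · rwa [map_add, hH.weightedHomogeneousComponent_same, hE.weightedHomogeneousComponent_ne _
      hmn.ne, add_zero]
  · rw [map_add, hH.weightedHomogeneousComponent_ne _ hk.ne, hE.weightedHomogeneousComponent_ne _
      (hk.trans hmn).ne, add_zero]

end LinearOrder

section OrderedGroup

variable [AddCommGroup M] [LinearOrder M] [IsOrderedAddMonoid M] {f g : MvPolynomial σ R}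
  {m n : M}

theorem IsLeastWeight.weightedHomogeneousComponent_mul (hf : IsLeastWeight w f m)
    (hg : IsLeastWeight w g n) {k : M} (hk : k ≤ m + n) :
    weightedHomogeneousComponent w k (f * g) =
      weightedHomogeneousComponent w (k - n) f * weightedHomogeneousComponent w n g := by
  classical
  conv_lhs => rw [← sum_weightedHomogeneousComponent_image (w := w) g]
  rw [Finset.mul_sum, map_sum]
  simp_rw [weightedHomogeneousComponent_mul_of_isWeightedHomogeneous
    (weightedHomogeneousComponent_isWeightedHomogeneous _ g)]
  refine Finset.sum_eq_single n (fun j _ hjn => ?_) (fun hn => ?_)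
  · rcases hjn.lt_or_gt with hj | hj
    · rw [hg.2 j hj, mul_zero]
    · have : k - j < m := sub_lt_iff_lt_add.mpr (hk.trans_lt (add_lt_add_right hj m))
      rw [hf.2 _ this, zero_mul]
  · rw [weightedHomogeneousComponent_eq_zero_of_notMem w g n hn, mul_zero]

theorem IsLeastWeight.mul [NoZeroDivisors R] (hf : IsLeastWeight w f m)
    (hg : IsLeastWeight w g n) : IsLeastWeight w (f * g) (m + n) := by
  refine ⟨?_, fun k hk => ?_⟩
  · rw [hf.weightedHomogeneousComponent_mul hg le_rfl, add_sub_cancel_right]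
    exact mul_ne_zero hf.1 hg.1
  · rw [hf.weightedHomogeneousComponent_mul hg hk.le, hf.2 _ (sub_lt_iff_lt_add.mpr hk),
      zero_mul]

end OrderedGroup

end WeightedHomogeneousComponent

end MvPolynomial

theorem wt_eq_weight {N : ℕ} (w : Fin N → ℝ) (u : Fin N →₀ ℕ) :
    wt w u = Finsupp.weight w u := by
  rw [wt, Finsupp.weight_apply, Finsupp.sum_fintype _ _ (by simp)]
  simp [mul_comm]

section InitialForm

variable {N : ℕ} {w : Fin N → ℝ} {f g : MvPolynomial (Fin N) ℂ} {m : ℝ}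

theorem initialForm_eq_of_isLeastWeight (h : IsLeastWeight w f m) :
    initialForm w f = weightedHomogeneousComponent w m f := by
  classical
  obtain ⟨d₀, hd₀, hwd₀⟩ := h.exists_mem_support
  rw [initialForm, weightedHomogeneousComponent_apply, ← Finset.sum_filter]
  refine Finset.sum_congr (Finset.filter_congr fun d hd => ?_) fun _ _ => rfl
  simp only [wt_eq_weight]
  constructor
  · intro hmin
    exact le_antisymm (hwd₀ ▸ hmin d₀ hd₀) (h.le_weight hd)
  · intro hd' d' hd''
    rw [hd']
    exact h.le_weight hd''

theorem exists_initialForm_eq (hf : f ≠ 0) :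
    ∃ m, IsLeastWeight w f m ∧ initialForm w f = weightedHomogeneousComponent w m f :=
  (exists_isLeastWeight hf).imp fun _ hm => ⟨hm, initialForm_eq_of_isLeastWeight hm⟩

@[simp]
theorem initialForm_zero : initialForm w (0 : MvPolynomial (Fin N) ℂ) = 0 := by
  simp [initialForm]

theorem initialForm_ne_zero (hf : f ≠ 0) : initialForm w f ≠ 0 := by
  obtain ⟨m, hm, h⟩ := exists_initialForm_eq (w := w) hf
  exact h ▸ hm.1

theorem initialForm_mul (hf : f ≠ 0) (hg : g ≠ 0) :
    initialForm w (f * g) = initialForm w f * initialForm w g := by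
  obtain ⟨m, hm, hfm⟩ := exists_initialForm_eq (w := w) hf
  obtain ⟨n, hn, hgn⟩ := exists_initialForm_eq (w := w) hg
  rw [initialForm_eq_of_isLeastWeight (hm.mul hn), hm.weightedHomogeneousComponent_mul hn le_rfl,
    add_sub_cancel_right, hfm, hgn]

theorem MvPolynomial.IsWeightedHomogeneous.initialForm_eq (hf : f.IsWeightedHomogeneous w m)
    (hf0 : f ≠ 0) : initialForm w f = f := by
  rw [initialForm_eq_of_isLeastWeight (hf.isLeastWeight hf0), hf.weightedHomogeneousComponent_same]

theorem initialForm_add_of_isWeightedHomogeneous {H E : MvPolynomial (Fin N) ℂ} {n : ℝ}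
    (hH : H.IsWeightedHomogeneous w m) (hH0 : H ≠ 0) (hE : E.IsWeightedHomogeneous w n)
    (hmn : m < n) : initialForm w (H + E) = H := by
  rw [initialForm_eq_of_isLeastWeight (isLeastWeight_add_of_isWeightedHomogeneous hH hH0 hE hmn),
    map_add, hH.weightedHomogeneousComponent_same, hE.weightedHomogeneousComponent_ne _ hmn.ne,
    add_zero]

theorem mem_initialIdeal_of_initialForm_eq {I : Ideal (MvPolynomial (Fin N) ℂ)} (hf : f ∈ I)
    (hfg : initialForm w f = g) (hg : g ≠ 0) : g ∈ initialIdeal w I := by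
  subst hfg
  refine Ideal.subset_span ⟨f, hf, ?_, rfl⟩
  rintro rfl
  exact hg initialForm_zero

theorem initialIdeal_span_singleton (hg : g ≠ 0) :
    initialIdeal w (Ideal.span {g}) = Ideal.span {initialForm w g} := by
  refine le_antisymm (Ideal.span_le.mpr ?_) ?_
  · rintro _ ⟨f, hf, hf0, rfl⟩
    obtain ⟨q, rfl⟩ := Ideal.mem_span_singleton'.mp hf
    rw [initialForm_mul (left_ne_zero_of_mul hf0) hg]
    exact Ideal.mul_mem_left _ _ (Ideal.mem_span_singleton_self _)
  · rw [Ideal.span_singleton_le_iff_mem]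
    exact mem_initialIdeal_of_initialForm_eq (Ideal.mem_span_singleton_self g) rfl
      (initialForm_ne_zero hg)

section PairSub

variable {F s u : MvPolynomial (Fin N) ℂ} {d e e' : ℝ}

theorem initialForm_mem_span_pair_of_eq_mul_add_mul_sub (hF : F.IsWeightedHomogeneous w d)
    (hFp : Prime F) (hs : s.IsWeightedHomogeneous w e) (hFs : ¬ F ∣ s)
    (hu : u.IsWeightedHomogeneous w e') (hee' : e < e') (a b : MvPolynomial (Fin N) ℂ)
    (hf0 : a * F + b * (u - s) ≠ 0) :
    initialForm w (a * F + b * (u - s)) ∈ Ideal.span {F, s} := by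
  obtain ⟨m, hm, hinit⟩ := exists_initialForm_eq (w := w) hf0
  set π := fun k => weightedHomogeneousComponent (R := ℂ) w k
  have hcomp : ∀ k, π k (a * F + b * (u - s)) =
      π (k - d) a * F + π (k - e') b * u - π (k - e) b * s := fun k => by
    simp only [π, mul_sub, map_add, map_sub,
      weightedHomogeneousComponent_mul_of_isWeightedHomogeneous hF,
      weightedHomogeneousComponent_mul_of_isWeightedHomogeneous hu,
      weightedHomogeneousComponent_mul_of_isWeightedHomogeneous hs]
    ring
  obtain ⟨k₀, hk₀⟩ : ∃ k₀, ∀ i < k₀, π i b = 0 := by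
    rcases eq_or_ne b 0 with rfl | hb
    · exact ⟨0, fun i _ => map_zero _⟩
    · exact (exists_isLeastWeight hb).imp fun _ h => h.2
  have hdvd : ∀ i < m - e, F ∣ π i b := by
    refine hFp.dvd_of_forall_dvd_mul_sub_mul (u := u) hFs (sub_pos.mpr hee') hk₀ fun i hi => ?_
    refine ⟨π (i + e - d) a, ?_⟩
    have h := hcomp (i + e)
    rw [hm.2 _ (by linarith), add_sub_cancel_right, show i + e - e' = i - (e' - e) by ring] at h
    linear_combination h
  obtain ⟨t, ht⟩ := hdvd (m - e') (by linarith)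
  rw [hinit]
  change π m _ ∈ _
  rw [hcomp m, ht]
  exact Ideal.mem_span_pair.mpr ⟨π (m - d) a + t * u, -π (m - e) b, by ring⟩

theorem initialIdeal_span_pair_sub (hF : F.IsWeightedHomogeneous w d) (hFp : Prime F)
    (hs : s.IsWeightedHomogeneous w e) (hFs : ¬ F ∣ s) (hu : u.IsWeightedHomogeneous w e')
    (hee' : e < e') :
    initialIdeal w (Ideal.span {F, u - s}) = Ideal.span {F, s} := by
  refine le_antisymm (Ideal.span_le.mpr ?_) (Ideal.span_le.mpr ?_)
  · rintro _ ⟨f, hf, hf0, rfl⟩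
    obtain ⟨a, b, rfl⟩ := Ideal.mem_span_pair.mp hf
    exact initialForm_mem_span_pair_of_eq_mul_add_mul_sub hF hFp hs hFs hu hee' a b hf0
  · have hs0 : s ≠ 0 := fun h => hFs (h ▸ dvd_zero F)
    rw [Set.insert_subset_iff, Set.singleton_subset_iff]
    exact ⟨mem_initialIdeal_of_initialForm_eq (Ideal.subset_span (Set.mem_insert F _))
        (hF.initialForm_eq hFp.ne_zero) hFp.ne_zero,
      mem_initialIdeal_of_initialForm_eq (Ideal.mem_span_pair.mpr ⟨0, -1, by ring⟩)
        (initialForm_add_of_isWeightedHomogeneous hs hs0 hu.neg hee') hs0⟩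

end PairSub

end InitialForm

theorem prime_xy_add_zu : Prime (X 0 * X 1 + X 2 * X 3 : MvPolynomial (Fin 4) ℂ) := by
  have h := prime_X_zero_mul_rename_succ_add (R := ℂ) (X_prime (i := (0 : Fin 3)))
    (b := X 1 * X 2) (not_dvd_of_eval_eq_zero ![0, 1, 1] (by simp) (by simp))
  convert h using 1
  simp

theorem prime_xz_sub_y_sq : Prime (X 0 * X 2 - X 1 ^ 2 : MvPolynomial (Fin 3) ℂ) := by
  have h := prime_X_zero_mul_rename_succ_add (R := ℂ) (X_prime (i := (1 : Fin 2)))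
    (b := -X 0 ^ 2) (not_dvd_of_eval_eq_zero ![1, 0] (by simp) (by simp))
  convert h using 1
  simp [sub_eq_add_neg]

theorem isPrime_span_x_add_y_xy_add_zu :
    (Ideal.span {X 0 + X 1, X 0 * X 1 + X 2 * X 3} : Ideal (MvPolynomial (Fin 4) ℂ)).IsPrime := by
  set J : Ideal (MvPolynomial (Fin 4) ℂ) := Ideal.span {X 0 + X 1, X 0 * X 1 + X 2 * X 3}
  -- `φ` kills `x + y` and sends `z, x, u` to `X 0, X 1, X 2`; `σ` inverts it modulo `x + y`.
  let φ : MvPolynomial (Fin 4) ℂ →ₐ[ℂ] MvPolynomial (Fin 3) ℂ :=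
    aeval ![X 1, -X 1, X 0, X 2]
  let σ : MvPolynomial (Fin 3) ℂ →ₐ[ℂ] MvPolynomial (Fin 4) ℂ := aeval ![X 2, X 0, X 3]
  have hσφ : (Ideal.Quotient.mkₐ ℂ J).comp (σ.comp φ) = Ideal.Quotient.mkₐ ℂ J := by
    refine algHom_ext fun i => ?_
    rw [AlgHom.comp_apply, Ideal.Quotient.mkₐ_eq_mk, Ideal.Quotient.eq]
    fin_cases i
    · simp [φ, σ]
    · convert neg_mem (Ideal.subset_span (Set.mem_insert (X 0 + X 1 : MvPolynomial (Fin 4) ℂ) _))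
        using 1
      simp [φ, σ]
      ring
    · simp [φ, σ]
    · simp [φ, σ]
  have hG : (Ideal.span {X 0 * X 2 - X 1 ^ 2} : Ideal (MvPolynomial (Fin 3) ℂ)).IsPrime :=
    (Ideal.span_singleton_prime prime_xz_sub_y_sq.ne_zero).mpr prime_xz_sub_y_sq
  suffices h : (Ideal.span {X 0 * X 2 - X 1 ^ 2}).comap φ.toRingHom = J from h ▸ hG.comap _
  refine Ideal.comap_eq_of_sub_mem (σ := σ.toRingHom) ?_ ?_ ?_
  · rw [Ideal.map_span, Ideal.span_le, Set.image_pair, Set.insert_subset_iff,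
      Set.singleton_subset_iff]
    constructor
    · simp [φ]
    · refine Ideal.mem_span_singleton.mpr ⟨1, ?_⟩
      simp [φ]
      ring
  · rw [Ideal.map_span, Ideal.span_le, Set.image_singleton, Set.singleton_subset_iff]
    refine Ideal.mem_span_pair.mpr ⟨-X 0, 1, ?_⟩
    simp [σ]
    ring
  · intro a
    rw [← Ideal.Quotient.eq]
    exact (AlgHom.congr_fun hσφ a).symm

theorem initialIdeal_reembedding :
    initialIdeal ![0, 0, -1, 1]
        (Ideal.span {X 0 * X 1 + X 0 * X 2 + X 1 * X 2, X 3 - X 0 - X 1}) =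
      Ideal.span {X 0 + X 1, X 0 * X 1 + X 2 * X 3} := by
  set w : Fin 4 → ℝ := ![0, 0, -1, 1]
  have hX : ∀ i, (X i : MvPolynomial (Fin 4) ℂ).IsWeightedHomogeneous w (w i) :=
    isWeightedHomogeneous_X ℂ w
  have hF : (X 0 * X 1 + X 2 * X 3 : MvPolynomial (Fin 4) ℂ).IsWeightedHomogeneous w 0 := by
    refine IsWeightedHomogeneous.add ?_ ?_ <;> convert (hX _).mul (hX _) using 1 <;> simp [w]
  have hs : (X 0 + X 1 : MvPolynomial (Fin 4) ℂ).IsWeightedHomogeneous w 0 := by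
    refine IsWeightedHomogeneous.add ?_ ?_ <;> convert hX _ using 1 <;> simp [w]
  have hu : (X 3 : MvPolynomial (Fin 4) ℂ).IsWeightedHomogeneous w 1 := by
    convert hX 3 using 1; simp [w]
  have hI : (Ideal.span {X 0 * X 1 + X 0 * X 2 + X 1 * X 2, X 3 - X 0 - X 1} :
      Ideal (MvPolynomial (Fin 4) ℂ)) = Ideal.span {X 0 * X 1 + X 2 * X 3, X 3 - X 0 - X 1} := by
    rw [← Ideal.span_pair_add_mul_right (x := X 0 * X 1 + X 2 * X 3) (z := -X 2)]
    congr 2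
    ring
  rw [hI, sub_sub, initialIdeal_span_pair_sub hF prime_xy_add_zu hs
    (not_dvd_of_eval_eq_zero ![1, 0, 0, 0] (by simp) (by simp)) hu zero_lt_one, Set.pair_comm]

theorem initialIdeal_span_xy_add_xz_add_yz :
    initialIdeal ![0, 0, -1] (Ideal.span {X 0 * X 1 + X 0 * X 2 + X 1 * X 2}) =
      Ideal.span {X 0 * X 2 + X 1 * X 2} := by
  set w : Fin 3 → ℝ := ![0, 0, -1]
  have hX : ∀ i, (X i : MvPolynomial (Fin 3) ℂ).IsWeightedHomogeneous w (w i) :=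
    isWeightedHomogeneous_X ℂ w
  have hH : (X 0 * X 2 + X 1 * X 2 : MvPolynomial (Fin 3) ℂ).IsWeightedHomogeneous w (-1) := by
    refine IsWeightedHomogeneous.add ?_ ?_ <;> convert (hX _).mul (hX _) using 1 <;> simp [w]
  have hE : (X 0 * X 1 : MvPolynomial (Fin 3) ℂ).IsWeightedHomogeneous w 0 := by
    convert (hX _).mul (hX _) using 1; simp [w]
  have hH0 : (X 0 * X 2 + X 1 * X 2 : MvPolynomial (Fin 3) ℂ) ≠ 0 := fun h => by
    simpa using congrArg (eval 1) h
  have hinit := initialForm_add_of_isWeightedHomogeneous hH hH0 hE (by norm_num)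
  rw [show (X 0 * X 1 + X 0 * X 2 + X 1 * X 2 : MvPolynomial (Fin 3) ℂ) =
    X 0 * X 2 + X 1 * X 2 + X 0 * X 1 by ring, initialIdeal_span_singleton, hinit]
  exact fun h => hH0 (by rw [← hinit, h, initialForm_zero])

theorem isBinomialIdeal_span_x_add_y_xy_add_zu :
    IsBinomialIdeal
      (Ideal.span {X 0 + X 1, X 0 * X 1 + X 2 * X 3} : Ideal (MvPolynomial (Fin 4) ℂ)) := by
  refine ⟨_, rfl, ?_⟩
  rintro f (rfl | rfl) <;> refine (card_support_add_le _ _).trans ?_ <;>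
    simp [support_mul_X, support_X]

theorem not_isPrime_span_xz_add_yz :
    ¬ (Ideal.span {X 0 * X 2 + X 1 * X 2} : Ideal (MvPolynomial (Fin 3) ℂ)).IsPrime := by
  rw [show (X 0 * X 2 + X 1 * X 2 : MvPolynomial (Fin 3) ℂ) = (X 0 + X 1) * X 2 by ring,
    Ideal.span_singleton_prime (fun h => by simpa using congrArg (eval 1) h)]
  intro h
  rcases h.irreducible.isUnit_or_isUnit rfl with h | h
  · simpa using h.map (eval 0)
  · exact X_prime.not_isUnit h

theorem span_xz_add_yz_le_comap_rename :
    (Ideal.span {X 0 * X 2 + X 1 * X 2} : Ideal (MvPolynomial (Fin 3) ℂ)) ≤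
      Ideal.comap (MvPolynomial.rename (Fin.castSucc : Fin 3 → Fin 4) :
          MvPolynomial (Fin 3) ℂ →ₐ[ℂ] MvPolynomial (Fin 4) ℂ)
        (Ideal.span {X 0 + X 1, X 0 * X 1 + X 2 * X 3}) := by
  rw [Ideal.span_le, Set.singleton_subset_iff, SetLike.mem_coe, Ideal.mem_comap]
  refine Ideal.mem_span_pair.mpr ⟨X 2, 0, ?_⟩
  simp
  ring

-- Variables: `0 ↦ x, 1 ↦ y, 2 ↦ z, 3 ↦ u`.
/-- Variables: `0 ↦ x, 1 ↦ y, 2 ↦ z, 3 ↦ u`. For the re-embedded ideal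
`I' = ⟨xy + xz + yz, u − x − y⟩ ⊆ ℂ[x,y,z,u]`, the initial ideal with respect to
`(0,0,−1,1)` is the binomial prime ideal `⟨x + y, xy + zu⟩`; in particular its
intersection with `ℂ[x,y,z]` contains the non-prime initial ideal
`⟨xz + yz⟩ = init_{(0,0,−1)}(⟨xy + xz + yz⟩)`. -/
theorem reembedding_initial_ideal_prime :
    initialIdeal ![0, 0, -1, 1]
        (Ideal.span {X 0 * X 1 + X 0 * X 2 + X 1 * X 2, X 3 - X 0 - X 1}) =
      Ideal.span {X 0 + X 1, X 0 * X 1 + X 2 * X 3} ∧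
    (Ideal.span {X 0 + X 1, X 0 * X 1 + X 2 * X 3} :
        Ideal (MvPolynomial (Fin 4) ℂ)).IsPrime ∧
    IsBinomialIdeal
      (Ideal.span {X 0 + X 1, X 0 * X 1 + X 2 * X 3} : Ideal (MvPolynomial (Fin 4) ℂ)) ∧
    initialIdeal ![0, 0, -1] (Ideal.span {X 0 * X 1 + X 0 * X 2 + X 1 * X 2}) =
      Ideal.span {X 0 * X 2 + X 1 * X 2} ∧
    ¬ (Ideal.span {X 0 * X 2 + X 1 * X 2} : Ideal (MvPolynomial (Fin 3) ℂ)).IsPrime ∧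
    (Ideal.span {X 0 * X 2 + X 1 * X 2} : Ideal (MvPolynomial (Fin 3) ℂ)) ≤
      Ideal.comap (MvPolynomial.rename (Fin.castSucc : Fin 3 → Fin 4) :
          MvPolynomial (Fin 3) ℂ →ₐ[ℂ] MvPolynomial (Fin 4) ℂ)
        (Ideal.span {X 0 + X 1, X 0 * X 1 + X 2 * X 3}) :=
  ⟨initialIdeal_reembedding, isPrime_span_x_add_y_xy_add_zu,
    isBinomialIdeal_span_x_add_y_xy_add_zu, initialIdeal_span_xy_add_xz_add_yz,
    not_isPrime_span_xz_add_yz, span_xz_add_yz_le_comap_rename⟩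
end

section
/- Let R be a commutative ring, n ≥ 2, and M an (n−1)×n matrix over R. For a nonempty subset K ⊆ {1,…,n} with |K| ≤ n−1, let p_K(M) denote the determinant of the |K|×|K| submatrix of M with row indices 1,…,|K| and column indices the elements of K taken in increasing order. Then for all subsets I, J ⊆ {1,…,n} with |I| + 2 ≤ |J|, one has Σ_{j ∈ J∖I} (−1)^{l_j} · p_{I∪{j}}(M) · p_{J∖{j}}(M) = 0, where l_j = #{k ∈ J : j < k} + #{i ∈ I : i < j}. In particular, every quadratic polynomial Σ_{j ∈ J∖I} (−1)^{l_j} p_{I∪{j}} p_{J∖{j}} in the Plücker variables lies in the kernel of the ring homomorphism φ_n sending each Plücker variable p_K to the minor p_K of the (n−1)×n matrix of indeterminates (x_{i,j}); these are the quadrics defining the flag variety Flag_n in its Plücker embedding. -/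
/-!
Write `c = |I|` and let `L x` be the minor on the first `c + 1` rows with columns `x` followed
by the elements of `I`. Expanding along the column `x` shows that `L` is a linear combination of
the rows of `M`; it vanishes on `I`, and for `j ∉ I` it is `p_{I ∪ {j}}` up to the sign
`(-1) ^ #{i ∈ I | i < j}`. Since `c + 1 < |J|`, stacking the row `(L j)_{j ∈ J}` on top of the
first `|J| - 1` rows of `M` (restricted to the columns `J`) gives a square matrix whose first row
is a combination of the others. Its determinant vanishes, and its Laplace expansion along the
first row is the Plücker relation up to a global sign. The polynomial identity is the case of
the generic matrix.
-/

open MvPolynomial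

/-- The Plücker minor `p_K(M)`: the determinant of the `|K| × |K|` submatrix of the
`(n−1) × n` matrix `M` with row indices `1, …, |K|` and column indices the elements of `K`
in increasing order (junk value `0` if `|K| > n − 1`). -/
noncomputable def pminor {R : Type*} [CommRing R] {n : ℕ}
    (M : Matrix (Fin (n - 1)) (Fin n) R) (K : Finset (Fin n)) : R :=
  if h : K.card ≤ n - 1 then
    (Matrix.of fun a b : Fin K.card => M (Fin.castLE h a) ((K.orderIsoOfFin rfl b : Fin n))).det
  else 0

/-- The sign exponent `l_j = #{k ∈ J : j < k} + #{i ∈ I : i < j}`. -/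
def lexp {n : ℕ} (I J : Finset (Fin n)) (j : Fin n) : ℕ :=
  (J.filter fun k => j < k).card + (I.filter fun i => i < j).card

/-- Index type for the Plücker variables: nonempty proper subsets of `{1, …, n}`. -/
def PluckerIdx (n : ℕ) : Type :=
  {K : Finset (Fin n) // K.Nonempty ∧ K ≠ Finset.univ}

/-- The ring homomorphism `φ_n` sending each Plücker variable `p_K` to the minor `p_K`
of the `(n−1) × n` matrix of indeterminates `(x_{i,j})`. -/
noncomputable def pluckerMap (n : ℕ) (R : Type*) [CommRing R] :
    MvPolynomial (PluckerIdx n) R →ₐ[R] MvPolynomial (Fin (n - 1) × Fin n) R :=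
  MvPolynomial.aeval fun K =>
    pminor (Matrix.of fun i j => (MvPolynomial.X (i, j) : MvPolynomial (Fin (n - 1) × Fin n) R))
      K.val

lemma insert_cond {n : ℕ} {I J : Finset (Fin n)} (hIJ : I.card + 2 ≤ J.card) {j : Fin n}
    (hj : j ∈ J \ I) : (insert j I).Nonempty ∧ insert j I ≠ Finset.univ := by
  refine ⟨⟨j, Finset.mem_insert_self _ _⟩, fun h => ?_⟩
  have h1 : (insert j I).card ≤ I.card + 1 := Finset.card_insert_le _ _
  have h2 : J.card ≤ n := le_trans (Finset.card_le_univ J) (by simp)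
  rw [h, Finset.card_univ, Fintype.card_fin] at h1
  omega

lemma erase_cond {n : ℕ} {I J : Finset (Fin n)} (hIJ : I.card + 2 ≤ J.card) {j : Fin n}
    (hj : j ∈ J \ I) : (J.erase j).Nonempty ∧ J.erase j ≠ Finset.univ := by
  have hjJ : j ∈ J := (Finset.mem_sdiff.mp hj).1
  have hc : (J.erase j).card = J.card - 1 := Finset.card_erase_of_mem hjJ
  have h2 : J.card ≤ n := le_trans (Finset.card_le_univ J) (by simp)
  constructor
  · rw [← Finset.card_pos, hc]
    omega
  · intro h
    rw [h, Finset.card_univ, Fintype.card_fin] at hc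
    have : j ∈ J.erase j := h ▸ Finset.mem_univ j
    exact absurd this (Finset.notMem_erase j J)

namespace Matrix

variable {R ι : Type*} [CommRing R]

theorem det_submatrix_vecCons_mem_span_rows {m : Type*} {c : ℕ} (B : Matrix m ι R)
    (ρ : Fin (c + 1) → m) (v : Fin c → ι) :
    (fun x => (B.submatrix ρ (vecCons x v)).det) ∈ Submodule.span R (Set.range B) := by
  have hexp : (fun x => (B.submatrix ρ (vecCons x v)).det) =
      ∑ i : Fin (c + 1),
        ((-1) ^ (i : ℕ) * (B.submatrix (ρ ∘ i.succAbove) v).det) • B (ρ i) := by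
    ext x
    rw [det_succ_column_zero, Finset.sum_apply]
    refine Finset.sum_congr rfl fun i _ => ?_
    simp only [Pi.smul_apply, smul_eq_mul, submatrix_apply, cons_val_zero]
    rw [submatrix_submatrix]
    ring_nf
    rfl
  rw [hexp]
  exact Submodule.sum_mem _ fun i _ =>
    Submodule.smul_mem _ _ (Submodule.subset_span ⟨ρ i, rfl⟩)

theorem sum_neg_one_pow_mul_det_submatrix_succAbove_eq_zero {s : ℕ}
    (M : Matrix (Fin s) ι R) {u : ι → R} (hu : u ∈ Submodule.span R (Set.range M))
    (w : Fin (s + 1) → ι) :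
    ∑ k : Fin (s + 1), (-1) ^ (k : ℕ) * u (w k) * (M.submatrix id (w ∘ k.succAbove)).det =
      0 := by
  obtain ⟨c, hc⟩ := (Submodule.mem_span_range_iff_exists_fun R).mp hu
  let N : Matrix (Fin (s + 1)) (Fin (s + 1)) R := of (vecCons (u ∘ w) (M.submatrix id w))
  have hrow : N 0 = ∑ k, vecCons 0 c k • N k := by
    ext k
    simp only [N, ← hc, of_apply, cons_val, Function.comp_apply, Finset.sum_apply, Pi.smul_apply,
      smul_eq_mul, Fin.sum_univ_succ, cons_val_zero, zero_mul, cons_val_succ, zero_add]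
    rfl
  have hdet : N.det = 0 := by
    simpa [updateRow_eq_self, ← hrow] using det_updateRow_sum N 0 (vecCons 0 c)
  rw [← hdet, det_succ_row_zero]
  rfl

theorem det_submatrix_eq_neg_one_pow_mul_det_vecCons {m : Type*} {c : ℕ} (B : Matrix m ι R)
    (ρ : Fin (c + 1) → m) (f : Fin (c + 1) → ι) (q : Fin (c + 1)) :
    (B.submatrix ρ f).det =
      (-1) ^ (q : ℕ) * (B.submatrix ρ (vecCons (f q) (f ∘ q.succAbove))).det := by
  rw [det_succ_column _ q, det_succ_column_zero, Finset.mul_sum]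
  refine Finset.sum_congr rfl fun i _ => ?_
  simp only [submatrix_apply, cons_val_zero, submatrix_submatrix, pow_add]
  ring_nf
  rfl

end Matrix

namespace Finset

variable {α : Type*} [LinearOrder α]

theorem card_filter_eq_card_filter_orderEmbOfFin (K : Finset α) {t : ℕ} (h : K.card = t)
    (p : α → Prop) [DecidablePred p] :
    #{y ∈ K | p y} = #{i | p (K.orderEmbOfFin h i)} := by
  conv_lhs => rw [← map_orderEmbOfFin_univ K h]
  rw [filter_map, card_map]
  rfl

theorem card_filter_lt_orderEmbOfFin (K : Finset α) {t : ℕ} (h : K.card = t) (k : Fin t) :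
    #{y ∈ K | y < K.orderEmbOfFin h k} = k := by
  simp only [card_filter_eq_card_filter_orderEmbOfFin K h, OrderEmbedding.lt_iff_lt,
    filter_gt_eq_Iio, Fin.card_Iio]

theorem card_filter_orderEmbOfFin_lt (K : Finset α) {t : ℕ} (h : K.card = t) (k : Fin t) :
    #{y ∈ K | K.orderEmbOfFin h k < y} = t - 1 - k := by
  simp only [card_filter_eq_card_filter_orderEmbOfFin K h, OrderEmbedding.lt_iff_lt,
    filter_lt_eq_Ioi, Fin.card_Ioi]

theorem orderEmbOfFin_erase {K s : Finset α} {t : ℕ} (hK : K.card = t + 1) (q : Fin (t + 1))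
    (hs : K.erase (K.orderEmbOfFin hK q) = s) (h : s.card = t) :
    ⇑(s.orderEmbOfFin h) = K.orderEmbOfFin hK ∘ q.succAbove := by
  subst hs
  refine (orderEmbOfFin_unique h (fun i => mem_erase.2 ⟨?_, orderEmbOfFin_mem K hK _⟩)
    ((K.orderEmbOfFin hK).strictMono.comp (Fin.strictMono_succAbove q))).symm
  exact fun hi => Fin.succAbove_ne q i ((K.orderEmbOfFin hK).injective hi)

end Finset

open Finset Matrix

section PluckerMinors

variable {R : Type*} [CommRing R] {n : ℕ} (M : Matrix (Fin (n - 1)) (Fin n) R)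

theorem pminor_eq_det_submatrix {K : Finset (Fin n)} {t : ℕ} (h : K.card = t) (ht : t ≤ n - 1) :
    pminor M K = (M.submatrix (Fin.castLE ht) (K.orderEmbOfFin h)).det := by
  subst h
  rw [pminor, dif_pos ht]
  rfl

noncomputable def consMinor {I : Finset (Fin n)} {c : ℕ} (hI : I.card = c) (hc : c + 1 ≤ n - 1)
    (x : Fin n) : R :=
  (M.submatrix (Fin.castLE hc) (vecCons x (I.orderEmbOfFin hI))).det

variable {I : Finset (Fin n)} {c : ℕ} (hI : I.card = c) (hc : c + 1 ≤ n - 1)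

theorem consMinor_eq_zero {x : Fin n} (hx : x ∈ I) : consMinor M hI hc x = 0 := by
  obtain ⟨b, rfl⟩ : x ∈ Set.range (I.orderEmbOfFin hI) := by rwa [range_orderEmbOfFin]
  exact det_zero_of_column_eq (Fin.succ_ne_zero b).symm fun i => by simp

theorem pminor_insert {j : Fin n} (hj : j ∉ I) :
    pminor M (insert j I) = (-1) ^ #{i ∈ I | i < j} * consMinor M hI hc j := by
  have hK : (insert j I).card = c + 1 := by rw [card_insert_of_notMem hj, hI]
  obtain ⟨q, hq⟩ : j ∈ Set.range ((insert j I).orderEmbOfFin hK) := by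
    rw [range_orderEmbOfFin]; exact mem_insert_self j I
  have hpos : #{i ∈ I | i < j} = q := by
    rw [← card_filter_lt_orderEmbOfFin _ hK q, hq, filter_insert, if_neg (lt_irrefl j)]
  have hcomp := orderEmbOfFin_erase hK q (by rw [hq, erase_insert hj]) hI
  rw [pminor_eq_det_submatrix M hK hc, det_submatrix_eq_neg_one_pow_mul_det_vecCons _ _ _ q, hq,
    ← hcomp, hpos]
  rfl

theorem sum_neg_one_pow_mul_consMinor_mul_pminor_erase_eq_zero {J : Finset (Fin n)}
    (hIJ : c + 1 < J.card) :
    ∑ j ∈ J, (-1) ^ #{y ∈ J | j < y} * consMinor M hI hc j * pminor M (J.erase j) = 0 := by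
  obtain ⟨s, hJ⟩ : ∃ s, J.card = s + 1 := ⟨J.card - 1, by omega⟩
  have hsn : s ≤ n - 1 := by have := (card_le_univ J).trans_eq (Fintype.card_fin n); omega
  set e := J.orderEmbOfFin hJ
  set Ms := M.submatrix (Fin.castLE hsn) id
  have hspan : consMinor M hI hc ∈ Submodule.span R (Set.range Ms) :=
    det_submatrix_vecCons_mem_span_rows Ms (Fin.castLE (by omega)) _
  have herase (k : Fin (s + 1)) :
      pminor M (J.erase (e k)) = (Ms.submatrix id (e ∘ k.succAbove)).det := by
    have hk : (J.erase (e k)).card = s := by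
      rw [card_erase_of_mem (orderEmbOfFin_mem J hJ k), hJ, Nat.add_sub_cancel]
    rw [pminor_eq_det_submatrix M hk hsn, orderEmbOfFin_erase hJ k rfl hk]
    rfl
  have hsign (k : Fin (s + 1)) : (-1 : R) ^ (s - k) = (-1) ^ s * (-1) ^ (k : ℕ) := by
    rw [← pow_add]
    exact neg_one_pow_congr (by rw [Nat.even_sub (by omega), Nat.even_add])
  calc ∑ j ∈ J, (-1) ^ #{y ∈ J | j < y} * consMinor M hI hc j * pminor M (J.erase j)
      = ∑ k, (-1) ^ #{y ∈ J | e k < y} * consMinor M hI hc (e k) *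
          pminor M (J.erase (e k)) := by
        nth_rw 1 [← map_orderEmbOfFin_univ J hJ]
        rw [sum_map]
        rfl
    _ = (-1) ^ s * ∑ k : Fin (s + 1),
          (-1) ^ (k : ℕ) * consMinor M hI hc (e k) *
            (Ms.submatrix id (e ∘ k.succAbove)).det := by
        rw [mul_sum]
        refine sum_congr rfl fun k _ => ?_
        rw [card_filter_orderEmbOfFin_lt, herase, Nat.add_sub_cancel, hsign]
        ring
    _ = 0 := by rw [sum_neg_one_pow_mul_det_submatrix_succAbove_eq_zero Ms hspan, mul_zero]

end PluckerMinors

theorem plucker_sum_eq_zero {R : Type*} [CommRing R] {n : ℕ}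
    (M : Matrix (Fin (n - 1)) (Fin n) R) (I J : Finset (Fin n)) (hIJ : I.card + 2 ≤ J.card) :
    ∑ j ∈ J \ I, (-1 : R) ^ lexp I J j * (pminor M (insert j I) * pminor M (J.erase j)) =
      0 := by
  have hc : I.card + 1 ≤ n - 1 := by
    have := (card_le_univ J).trans_eq (Fintype.card_fin n); omega
  have hterm (j) (hj : j ∈ J \ I) :
      (-1 : R) ^ lexp I J j * (pminor M (insert j I) * pminor M (J.erase j)) =
        (-1) ^ #{y ∈ J | j < y} * consMinor M rfl hc j * pminor M (J.erase j) := by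
    rw [pminor_insert M rfl hc (mem_sdiff.1 hj).2, lexp, pow_add]
    ring_nf
    simp
  rw [sum_congr rfl hterm, sum_subset sdiff_subset fun j hjJ hj => ?_,
    sum_neg_one_pow_mul_consMinor_mul_pminor_erase_eq_zero M rfl hc (by omega)]
  rw [consMinor_eq_zero M rfl hc (by simpa [hjJ] using hj), mul_zero, zero_mul]

theorem plucker_relations_general {R : Type*} [CommRing R] (n : ℕ)
    (M : Matrix (Fin (n - 1)) (Fin n) R) (I J : Finset (Fin n))
    (hIJ : I.card + 2 ≤ J.card) :
    (∑ j ∈ J \ I, (-1 : R) ^ lexp I J j * (pminor M (insert j I) * pminor M (J.erase j)) = 0)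
    ∧
    (∑ j ∈ (J \ I).attach,
        (-1 : MvPolynomial (PluckerIdx n) R) ^ lexp I J j.val *
          (X (⟨insert j.val I, insert_cond hIJ j.2⟩ : PluckerIdx n) *
            X (⟨J.erase j.val, erase_cond hIJ j.2⟩ : PluckerIdx n))) ∈
      RingHom.ker (pluckerMap n R).toRingHom := by
  refine ⟨plucker_sum_eq_zero M I J hIJ, ?_⟩
  rw [RingHom.mem_ker, map_sum, ← plucker_sum_eq_zero (of fun i j => X (i, j)) I J hIJ,
    ← sum_attach (J \ I)]
  refine sum_congr rfl fun j _ => ?_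
  -- the variables `X ⟨K, _⟩` of the statement live over the unfolded subtype, hiding `map_mul`
  change pluckerMap n R ((-1) ^ _ *
    ((X _ : MvPolynomial (PluckerIdx n) R) * (X _ : MvPolynomial (PluckerIdx n) R))) = _
  simp only [map_mul, map_pow, map_neg, map_one, pluckerMap]
  congr 2 <;> exact aeval_X _ _

/-- The Plücker relations: for subsets `I, J ⊆ {1,…,n}` with `|I| + 2 ≤ |J|`, the signed
sum `Σ_{j ∈ J∖I} (−1)^{l_j} p_{I∪{j}}(M) p_{J∖{j}}(M)` vanishes for every
`(n−1) × n` matrix `M`; in particular the corresponding quadratic polynomial in the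
Plücker variables lies in the kernel of `φ_n`. -/
theorem plucker_relations {R : Type*} [CommRing R] (n : ℕ) (hn : 2 ≤ n)
    (M : Matrix (Fin (n - 1)) (Fin n) R) (I J : Finset (Fin n))
    (hIJ : I.card + 2 ≤ J.card) :
    (∑ j ∈ J \ I, (-1 : R) ^ lexp I J j * (pminor M (insert j I) * pminor M (J.erase j)) = 0)
    ∧
    (∑ j ∈ (J \ I).attach,
        (-1 : MvPolynomial (PluckerIdx n) R) ^ lexp I J j.val *
          (X (⟨insert j.val I, insert_cond hIJ j.2⟩ : PluckerIdx n) *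
            X (⟨J.erase j.val, erase_cond hIJ j.2⟩ : PluckerIdx n))) ∈
      RingHom.ker (pluckerMap n R).toRingHom :=
  plucker_relations_general n M I J hIJ
end
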